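/- arXiv:1404.6214 — 4 statements merged into one kernel-verified Lean document; each statement's English description precedes it below -/
import Mathlib

section
/- Let H be a complex Hilbert space, C ⊆ H a closed convex set with orthogonal projection P onto C, and T : H → H a self-adjoint contraction with T(C) ⊆ C. Then for every ξ ∈ H, Re⟨Pξ, (I - T)(ξ - Pξ)⟩ ≥ 0. -/
/-- If `P` is the nearest-point projection onto a closed convex set `C` in a complex
Hilbert space and `T` is a self-adjoint contraction with `T(C) ⊆ C`, then
`Re⟨Pξ, (I - T)(ξ - Pξ)⟩ ≥ 0` for every `ξ`. -/
theorem stmt3 {H : Type*} [NormedAddCommGroup H] [InnerProductSpace ℂ H] [CompleteSpace H]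
    (C : Set H) (hclosed : IsClosed C) (hconv : Convex ℝ C)
    (P : H → H)
    (hPmem : ∀ ξ : H, P ξ ∈ C)
    (hPchar : ∀ ξ : H, ∀ η ∈ C, (inner ℂ (η - P ξ) (ξ - P ξ) : ℂ).re ≤ 0)
    (T : H →L[ℂ] H) (hsa : IsSelfAdjoint T) (hcontr : ‖T‖ ≤ 1)
    (hTC : ∀ x ∈ C, T x ∈ C) :
    ∀ ξ : H, 0 ≤ (inner ℂ (P ξ) ((ξ - P ξ) - T (ξ - P ξ)) : ℂ).re := by
  intro ξ
  have h := hPchar ξ (T (P ξ)) (hTC _ (hPmem ξ))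
  have hadj : (inner ℂ (P ξ) (T (ξ - P ξ)) : ℂ) = inner ℂ (T (P ξ)) (ξ - P ξ) := by
    rw [← ContinuousLinearMap.adjoint_inner_left, hsa.adjoint_eq]
  rw [inner_sub_right, hadj]
  rw [inner_sub_left] at h
  simp only [Complex.sub_re] at h ⊢
  linarith
end

section
/- Let H be a Hilbert space, C ⊆ H a closed convex set, and T₁,…,Tₙ self-adjoint contractions on H each mapping C into itself. Let A = n·I - (T₁ + ⋯ + Tₙ) and A_t = exp(-tA) for t ≥ 0. Then A_t(C) ⊆ C for every t ≥ 0. -/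
open ContinuousLinearMap

open Filter Finset

lemma mem_of_hasSum_convex {H : Type*} [NormedAddCommGroup H] [NormedSpace ℝ H]
    {C : Set H} (hclosed : IsClosed C) (hconv : Convex ℝ C)
    {c : ℕ → ℝ} {y : ℕ → H} {z : H} (hc0 : ∀ k, 0 ≤ c k) (hc1 : HasSum c 1)
    (hy : ∀ k, y k ∈ C) (hz : HasSum (fun k => c k • y k) z) : z ∈ C := by
  have hs := hc1.tendsto_sum_nat
  have hp := hz.tendsto_sum_nat
  have hev : ∀ᶠ N in atTop, 0 < ∑ k ∈ Finset.range N, c k :=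
    hs.eventually (eventually_gt_nhds one_pos)
  have hmem : ∀ᶠ N in atTop,
      (∑ k ∈ Finset.range N, c k)⁻¹ • (∑ k ∈ Finset.range N, c k • y k) ∈ C := by
    filter_upwards [hev] with N hN
    rw [Finset.smul_sum]
    simp_rw [smul_smul]
    refine hconv.sum_mem (fun k _ => ?_) ?_ (fun k _ => hy k)
    · exact mul_nonneg (inv_nonneg.2 hN.le) (hc0 k)
    · rw [← Finset.mul_sum, inv_mul_cancel₀ hN.ne']
  have hten : Tendsto (fun N => (∑ k ∈ Finset.range N, c k)⁻¹ •
      (∑ k ∈ Finset.range N, c k • y k)) atTop (nhds ((1 : ℝ)⁻¹ • z)) :=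
    (hs.inv₀ one_ne_zero).smul hp
  rw [inv_one, one_smul] at hten
  exact hclosed.mem_of_tendsto hten hmem

/-- If `T₁, …, Tₙ` are self-adjoint contractions each mapping a closed convex set `C` into
itself, and `A = n·I - ∑ᵢ Tᵢ`, then `exp(-tA)` maps `C` into itself for every `t ≥ 0`. -/
theorem stmt4 {H : Type*} [NormedAddCommGroup H] [InnerProductSpace ℂ H] [CompleteSpace H]
    (C : Set H) (hclosed : IsClosed C) (hconv : Convex ℝ C)
    (n : ℕ) (T : Fin n → H →L[ℂ] H)
    (hsa : ∀ i, IsSelfAdjoint (T i)) (hcontr : ∀ i, ‖T i‖ ≤ 1)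
    (hTC : ∀ i, ∀ x ∈ C, T i x ∈ C) :
    ∀ t : ℝ, 0 ≤ t → ∀ x ∈ C,
      NormedSpace.exp
        (-(t : ℂ) • ((n : ℂ) • (1 : H →L[ℂ] H) - ∑ i, T i)) x ∈ C := by
  intro t ht x hx
  rcases Nat.eq_zero_or_pos n with hn | hn
  · subst hn
    simp [NormedSpace.exp_zero]
    exact hx
  set S : H →L[ℂ] H := ∑ i, T i with hS
  -- step 1: each (n⁻¹)^k • S^k x ∈ C
  have hnR : (0:ℝ) < (n:ℝ) := by exact_mod_cast hn
  have hstep : ∀ y ∈ C, ((n:ℝ)⁻¹) • S y ∈ C := by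
    intro y hy
    have : ((n:ℝ)⁻¹) • S y = ∑ i : Fin n, ((n:ℝ)⁻¹) • T i y := by
      rw [← Finset.smul_sum]
      congr 1
      simp [hS, ContinuousLinearMap.sum_apply]
    rw [this]
    refine hconv.sum_mem (fun i _ => by positivity) ?_ (fun i _ => hTC i y hy)
    simp [Finset.card_univ, hnR.ne']
  have hy : ∀ k : ℕ, (((n:ℝ)⁻¹)^k) • (S^k) x ∈ C := by
    intro k
    induction k with
    | zero => simpa using hx
    | succ k ih =>
      have : (((n:ℝ)⁻¹)^(k+1)) • (S^(k+1)) x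
          = ((n:ℝ)⁻¹) • S ((((n:ℝ)⁻¹)^k) • (S^k) x) := by
        rw [map_smul_of_tower, smul_smul, pow_succ', pow_succ' S k,
          ContinuousLinearMap.mul_apply]
      rw [this]
      exact hstep _ ih
  -- split the exponential
  have hsplit : (-(t : ℂ)) • ((n : ℂ) • (1 : H →L[ℂ] H) - S)
      = ((-(t*(n:ℝ)) : ℝ) : ℂ) • (1 : H →L[ℂ] H) + (t:ℂ) • S := by
    push_cast
    module
  let _ : NormedAlgebra ℚ (H →L[ℂ] H) := .restrictScalars ℚ ℂ (H →L[ℂ] H)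
  rw [hsplit, NormedSpace.exp_add_of_commute ((Commute.one_left ((t:ℂ) • S)).smul_left _)]
  set a : ℝ := -(t*(n:ℝ)) with ha
  have h1 : NormedSpace.exp ((a : ℂ) • (1 : H →L[ℂ] H))
      = ((Real.exp a : ℝ) : ℂ) • (1 : H →L[ℂ] H) := by
    rw [← Algebra.algebraMap_eq_smul_one, ← NormedSpace.algebraMap_exp_comm,
      Algebra.algebraMap_eq_smul_one, ← Complex.exp_eq_exp_ℂ, Complex.ofReal_exp]
  rw [ContinuousLinearMap.mul_apply, h1, ContinuousLinearMap.smul_apply,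
    ContinuousLinearMap.one_apply]
  -- series for exp(tS) x
  have hS1 : HasSum (fun k : ℕ => ((k.factorial : ℂ)⁻¹ • ((t:ℂ) • S)^k) x)
      (NormedSpace.exp ((t:ℂ) • S) x) := by
    have h := (NormedSpace.exp_series_hasSum_exp' (𝕂 := ℂ) ((t:ℂ) • S)).mapL
      (ContinuousLinearMap.apply ℂ H x)
    simpa using h
  have h2 := hS1.const_smul (((Real.exp a : ℝ) : ℂ))
  set c : ℕ → ℝ := fun k => Real.exp a * ((k.factorial : ℝ)⁻¹ * (t*(n:ℝ))^k) with hc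
  set y : ℕ → H := fun k => (((n:ℝ)⁻¹)^k) • (S^k) x with hyy
  have hc0 : ∀ k, 0 ≤ c k := by
    intro k
    exact mul_nonneg (Real.exp_pos _).le (mul_nonneg (inv_nonneg.2 (Nat.cast_nonneg _))
      (pow_nonneg (mul_nonneg ht (Nat.cast_nonneg _)) _))
  have hc1 : HasSum c 1 := by
    have h := (NormedSpace.exp_series_hasSum_exp' (𝕂 := ℝ) (t*(n:ℝ))).mul_left (Real.exp a)
    simp only [smul_eq_mul] at h
    rw [← Real.exp_eq_exp_ℝ, ha, ← Real.exp_add, neg_add_cancel, Real.exp_zero] at h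
    exact h
  have hpt : ∀ k, c k • y k
      = ((Real.exp a : ℝ) : ℂ) • (((k.factorial : ℂ)⁻¹ • ((t:ℂ) • S)^k) x) := by
    intro k
    have hco : c k * ((n:ℝ)⁻¹)^k = Real.exp a * t^k / k.factorial := by
      have : (k.factorial : ℝ) ≠ 0 := Nat.cast_ne_zero.2 k.factorial_ne_zero
      field_simp [hc]
      simp only [hc]
      have hn' : (n:ℝ)^k * (1/(n:ℝ))^k = 1 := by
        rw [← mul_pow, mul_one_div_cancel hnR.ne', one_pow]
      have hf : ((k.factorial:ℝ))⁻¹ * k.factorial = 1 := inv_mul_cancel₀ this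
      linear_combination (Real.exp a * t^k * (((k.factorial:ℝ))⁻¹ * k.factorial)) * hn'
        + (Real.exp a * t^k) * hf
    calc c k • y k = (Real.exp a * t^k / k.factorial) • (S^k) x := by
          rw [hyy, smul_smul, hco]
      _ = (((Real.exp a * t^k / k.factorial : ℝ)) : ℂ) • (S^k) x :=
          (Complex.coe_smul _ _).symm
      _ = ((Real.exp a : ℝ) : ℂ) • (((k.factorial : ℂ)⁻¹ • ((t:ℂ) • S)^k) x) := by
          rw [smul_pow, ContinuousLinearMap.smul_apply, ContinuousLinearMap.smul_apply,
            smul_smul, smul_smul]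
          congr 1
          push_cast
          have : ((k.factorial : ℂ)) ≠ 0 := Nat.cast_ne_zero.2 k.factorial_ne_zero
          field_simp
  have hz : HasSum (fun k => c k • y k)
      (((Real.exp a : ℝ) : ℂ) • NormedSpace.exp ((t:ℂ) • S) x) := by
    have hfun : (fun k => c k • y k)
        = fun k => ((Real.exp a : ℝ) : ℂ) • (((k.factorial : ℂ)⁻¹ • ((t:ℂ) • S)^k) x) :=
      funext hpt
    rw [hfun]
    exact h2
  exact mem_of_hasSum_convex hclosed hconv hc0 hc1 hy hz
end

section
/- Let H be a Hilbert space, C ⊆ H a closed convex set, n ≥ 1, and T₁,…,Tₙ self-adjoint contractions on H mapping C into itself. Put A = n·I - ∑ᵢ Tᵢ. Then for every λ > 0 the operator λ(λI + A)^{-1} is a self-adjoint contraction mapping C into itself. -/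
open ContinuousLinearMap

set_option maxHeartbeats 1000000

/-- With `A = n·I - ∑ᵢ Tᵢ` for self-adjoint contractions `Tᵢ` leaving a closed convex set `C`
invariant, for every `λ > 0` the operator `λ(λI + A)⁻¹` exists, is a self-adjoint contraction,
and maps `C` into itself. -/
theorem stmt5 {H : Type*} [NormedAddCommGroup H] [InnerProductSpace ℂ H] [CompleteSpace H]
    (C : Set H) (hclosed : IsClosed C) (hconv : Convex ℝ C)
    (n : ℕ) (hn : 1 ≤ n) (T : Fin n → H →L[ℂ] H)
    (hsa : ∀ i, IsSelfAdjoint (T i)) (hcontr : ∀ i, ‖T i‖ ≤ 1)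
    (hTC : ∀ i, ∀ x ∈ C, T i x ∈ C) :
    ∀ lam : ℝ, 0 < lam → ∃ B : H →L[ℂ] H,
      ((lam : ℂ) • (1 : H →L[ℂ] H) + ((n : ℂ) • (1 : H →L[ℂ] H) - ∑ i, T i)) ∘L B = 1 ∧
      B ∘L ((lam : ℂ) • (1 : H →L[ℂ] H) + ((n : ℂ) • (1 : H →L[ℂ] H) - ∑ i, T i)) = 1 ∧
      IsSelfAdjoint ((lam : ℂ) • B) ∧ ‖(lam : ℂ) • B‖ ≤ 1 ∧
      ∀ x ∈ C, ((lam : ℂ) • B) x ∈ C := by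
  intro lam hlam
  classical
  set S : H →L[ℂ] H := ∑ i, T i with hSdef
  have hnR : (0:ℝ) < (n:ℝ) := by exact_mod_cast hn
  have hSnorm : ‖S‖ ≤ (n:ℝ) := by
    calc ‖S‖ ≤ ∑ i, ‖T i‖ := norm_sum_le _ _
    _ ≤ ∑ _i : Fin n, (1:ℝ) := Finset.sum_le_sum fun i _ => hcontr i
    _ = (n:ℝ) := by simp
  set μ : ℝ := lam + n with hμdef
  have hμpos : (0:ℝ) < μ := by positivity
  have hμne : (μ:ℂ) ≠ 0 := by
    simp only [ne_eq, Complex.ofReal_eq_zero]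
    exact ne_of_gt hμpos
  have hnlt : (n:ℝ) < μ := by simp [hμdef]; linarith
  set t : H →L[ℂ] H := ((μ:ℂ))⁻¹ • S with htdef
  have ht : ‖t‖ < 1 := by
    rw [htdef, norm_smul, norm_inv, Complex.norm_real, Real.norm_eq_abs, abs_of_pos hμpos]
    calc μ⁻¹ * ‖S‖ ≤ μ⁻¹ * (n:ℝ) := by
          apply mul_le_mul_of_nonneg_left hSnorm (by positivity)
    _ < 1 := by rw [inv_mul_lt_iff₀ hμpos]; linarith
  set u : (H →L[ℂ] H)ˣ := Units.oneSub t ht with hudef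
  set M : H →L[ℂ] H := (lam:ℂ) • (1 : H →L[ℂ] H) + ((n:ℂ) • (1 : H →L[ℂ] H) - S) with hMdef
  set B : H →L[ℂ] H := ((μ:ℂ))⁻¹ • (↑u⁻¹ : H →L[ℂ] H) with hBdef
  have hMu : M = (μ:ℂ) • (u : H →L[ℂ] H) := by
    have hval : (u : H →L[ℂ] H) = 1 - t := rfl
    rw [hMdef, hval, htdef, smul_sub, smul_smul, mul_inv_cancel₀ hμne, one_smul, hμdef]
    push_cast
    module
  have hMB : M * B = 1 := by
    rw [hMu, hBdef, smul_mul_smul_comm, mul_inv_cancel₀ hμne, one_smul]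
    exact_mod_cast u.mul_inv
  have hBM : B * M = 1 := by
    rw [hMu, hBdef, smul_mul_smul_comm, inv_mul_cancel₀ hμne, one_smul]
    exact_mod_cast u.inv_mul
  have hMsa : star M = M := by
    have hSsa : star S = S := by
      rw [hSdef, star_sum]
      exact Finset.sum_congr rfl fun i _ => (hsa i)
    rw [hMdef]
    simp [star_smul, hSsa, Complex.conj_ofReal]
  have hBsa : star B = B := by
    have h1 : star B * M = 1 := by
      calc star B * M = star B * star M := by rw [hMsa]
      _ = star (M * B) := (star_mul M B).symm
      _ = 1 := by rw [hMB, star_one]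
    calc star B = star B * 1 := (mul_one _).symm
    _ = star B * (M * B) := by rw [hMB]
    _ = (star B * M) * B := (mul_assoc _ _ _).symm
    _ = 1 * B := by rw [h1]
    _ = B := one_mul B
  refine ⟨B, hMB, hBM, ?_, ?_, ?_⟩
  · -- self-adjoint
    show star ((lam:ℂ) • B) = (lam:ℂ) • B
    rw [star_smul, hBsa, Complex.star_def, Complex.conj_ofReal]
  · -- norm bound
    apply opNorm_le_bound _ zero_le_one
    intro x
    rw [one_mul]
    set y : H := B x with hy
    have hMy : M y = x := by
      have := congrArg (fun f : H →L[ℂ] H => f x) hMB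
      simpa [ContinuousLinearMap.mul_apply] using this
    have hinner : lam * ‖y‖^2 ≤ Complex.re (inner ℂ x y : ℂ) := by
      have hMyval : M y = (μ:ℂ) • y - S y := by
        rw [hMdef]
        simp only [ContinuousLinearMap.add_apply, ContinuousLinearMap.sub_apply,
          ContinuousLinearMap.smul_apply, ContinuousLinearMap.one_apply, hμdef]
        push_cast
        module
      have hexp : (inner ℂ x y : ℂ) = (μ:ℂ) * (inner ℂ y y) - inner ℂ (S y) y := by
        rw [← hMy, hMyval, inner_sub_left, inner_smul_left, Complex.conj_ofReal]
      have hyy : (inner ℂ y y : ℂ) = ((‖y‖^2 : ℝ) : ℂ) := by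
        rw [inner_self_eq_norm_sq_to_K]; norm_cast
      have hre : Complex.re (inner ℂ x y : ℂ)
          = μ * ‖y‖^2 - Complex.re (inner ℂ (S y) y : ℂ) := by
        rw [hexp, hyy, Complex.sub_re, ← Complex.ofReal_mul, Complex.ofReal_re]
      have hb : Complex.re (inner ℂ (S y) y : ℂ) ≤ (n:ℝ) * ‖y‖^2 := by
        calc Complex.re (inner ℂ (S y) y : ℂ) ≤ ‖(inner ℂ (S y) y : ℂ)‖ := Complex.re_le_norm _
        _ ≤ ‖S y‖ * ‖y‖ := norm_inner_le_norm _ _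
        _ ≤ (‖S‖ * ‖y‖) * ‖y‖ := by
            apply mul_le_mul_of_nonneg_right (S.le_opNorm y) (norm_nonneg _)
        _ ≤ ((n:ℝ) * ‖y‖) * ‖y‖ := by
            apply mul_le_mul_of_nonneg_right
              (mul_le_mul_of_nonneg_right hSnorm (norm_nonneg _)) (norm_nonneg _)
        _ = (n:ℝ) * ‖y‖^2 := by ring
      rw [hre, hμdef]; linarith
    have habs : Complex.re (inner ℂ x y : ℂ) ≤ ‖x‖ * ‖y‖ := by
      calc Complex.re (inner ℂ x y : ℂ) ≤ ‖(inner ℂ x y : ℂ)‖ := Complex.re_le_norm _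
      _ ≤ ‖x‖ * ‖y‖ := norm_inner_le_norm _ _
    have hnormy : lam * ‖y‖ ≤ ‖x‖ := by
      rcases eq_or_lt_of_le (norm_nonneg y) with h0 | h0
      · rw [← h0, mul_zero]; exact norm_nonneg x
      · have : lam * ‖y‖ * ‖y‖ ≤ ‖x‖ * ‖y‖ := by nlinarith
        exact le_of_mul_le_mul_right this h0
    calc ‖((lam:ℂ) • B) x‖ = ‖(lam:ℂ) • (B x)‖ := by rw [ContinuousLinearMap.smul_apply]
    _ = lam * ‖y‖ := by rw [norm_smul, Complex.norm_real, Real.norm_eq_abs, abs_of_pos hlam, hy]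
    _ ≤ ‖x‖ := hnormy
  · -- invariance of C
    intro x hx
    set y : H := ((lam:ℂ) • B) x with hy
    have hMy : M (B x) = x := by
      have := congrArg (fun f : H →L[ℂ] H => f x) hMB
      simpa [ContinuousLinearMap.mul_apply] using this
    -- fixed point equation: μ • y = lam • x + S y  (real scalars)
    have hfix : (μ:ℝ) • y = lam • x + S y := by
      have h1 : M y = (lam:ℂ) • x := by
        rw [hy, ContinuousLinearMap.smul_apply, map_smul, hMy]
      have h2 : (μ:ℂ) • y = (lam:ℂ) • x + S y := by
        have h3 : M y = (lam:ℂ) • y + ((n:ℂ) • y - S y) := by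
          rw [hMdef]; simp
        rw [h3] at h1
        have : (μ:ℂ) • y = ((lam:ℂ) + (n:ℂ)) • y := by
          rw [hμdef]; push_cast; ring_nf
        rw [this, add_smul]
        linear_combination (norm := module) h1
      calc (μ:ℝ) • y = (μ:ℂ) • y := (Complex.coe_smul μ y).symm
      _ = (lam:ℂ) • x + S y := h2
      _ = lam • x + S y := by rw [Complex.coe_smul]
    -- the contraction map
    set F : H → H := fun z => (lam/μ) • x + μ⁻¹ • (S z) with hFdef
    have hFC : ∀ z ∈ C, F z ∈ C := by
      intro z hz
      have hw : ((n:ℝ))⁻¹ • S z ∈ C := by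
        have hSz : S z = ∑ i, T i z := by
          rw [hSdef]; simp [ContinuousLinearMap.sum_apply]
        rw [hSz, Finset.smul_sum]
        apply hconv.sum_mem
        · intro i _; positivity
        · rw [Finset.sum_const, Finset.card_univ, Fintype.card_fin, nsmul_eq_mul]
          field_simp
        · intro i _; exact hTC i z hz
      have heq : F z = (lam/μ) • x + ((n:ℝ)/μ) • (((n:ℝ))⁻¹ • S z) := by
        have hc : (n:ℝ)/μ * ((n:ℝ))⁻¹ = μ⁻¹ := by field_simp
        rw [hFdef, smul_smul, hc]
      have hab : lam/μ + (n:ℝ)/μ = 1 := by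
        rw [← add_div, ← hμdef, div_self (ne_of_gt hμpos)]
      rw [heq]
      exact hconv hx hw (by positivity) (by positivity) hab
    have hlip : ∀ a b : H, ‖F a - F b‖ ≤ ((n:ℝ)/μ) * ‖a - b‖ := by
      intro a b
      have : F a - F b = μ⁻¹ • (S (a - b)) := by
        rw [hFdef]; simp [map_sub, smul_sub]
      rw [this, norm_smul, norm_inv, Real.norm_eq_abs, abs_of_pos hμpos]
      calc μ⁻¹ * ‖S (a - b)‖ ≤ μ⁻¹ * (‖S‖ * ‖a - b‖) := by
            apply mul_le_mul_of_nonneg_left (S.le_opNorm _) (by positivity)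
      _ ≤ μ⁻¹ * ((n:ℝ) * ‖a - b‖) := by
            apply mul_le_mul_of_nonneg_left
              (mul_le_mul_of_nonneg_right hSnorm (norm_nonneg _)) (by positivity)
      _ = ((n:ℝ)/μ) * ‖a - b‖ := by ring
    have hFy : F y = y := by
      rw [hFdef]
      have h4 : μ⁻¹ • ((μ:ℝ) • y) = y := by
        rw [smul_smul, inv_mul_cancel₀ (ne_of_gt hμpos), one_smul]
      calc (lam/μ) • x + μ⁻¹ • (S y)
          = μ⁻¹ • (lam • x + S y) := by rw [smul_add, smul_smul]; ring_nf
      _ = μ⁻¹ • ((μ:ℝ) • y) := by rw [← hfix]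
      _ = y := h4
    -- Banach fixed point in C
    haveI : CompleteSpace C := hclosed.completeSpace_coe
    haveI : Nonempty C := ⟨⟨x, hx⟩⟩
    have hKnn : (0:ℝ) ≤ (n:ℝ)/μ := by positivity
    set K : NNReal := ⟨(n:ℝ)/μ, hKnn⟩ with hKdef
    have hK1 : (K:ℝ) < 1 := by
      show (n:ℝ)/μ < 1
      rw [div_lt_one hμpos]; exact hnlt
    set f : C → C := fun z => ⟨F z.1, hFC z.1 z.2⟩ with hfdef
    have hf : ContractingWith K f := by
      constructor
      · exact_mod_cast hK1
      · apply LipschitzWith.of_dist_le_mul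
        intro a b
        have : dist (f a) (f b) = ‖F a.1 - F b.1‖ := by
          rw [Subtype.dist_eq, dist_eq_norm]
        rw [this]
        have : dist a b = ‖a.1 - b.1‖ := by rw [Subtype.dist_eq, dist_eq_norm]
        rw [this]
        exact hlip a.1 b.1
    set z : C := ContractingWith.fixedPoint f hf with hzdef
    have hFz : F z.1 = z.1 := congrArg Subtype.val hf.fixedPoint_isFixedPt
    have hyz : y = z.1 := by
      have h5 : ‖y - z.1‖ ≤ ((n:ℝ)/μ) * ‖y - z.1‖ := by
        calc ‖y - z.1‖ = ‖F y - F z.1‖ := by rw [hFy, hFz]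
        _ ≤ ((n:ℝ)/μ) * ‖y - z.1‖ := hlip y z.1
      have h5' : μ * ‖y - z.1‖ ≤ (n:ℝ) * ‖y - z.1‖ := by
        calc μ * ‖y - z.1‖ ≤ μ * (((n:ℝ)/μ) * ‖y - z.1‖) :=
              mul_le_mul_of_nonneg_left h5 (le_of_lt hμpos)
        _ = (n:ℝ) * ‖y - z.1‖ := by field_simp
      have h6 : ‖y - z.1‖ = 0 := by nlinarith [norm_nonneg (y - z.1), hnlt]
      exact sub_eq_zero.mp (norm_eq_zero.mp h6)
    rw [hyz]
    exact z.2
end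

section
/- Let N > 2 be an integer and U_s the Chebyshev polynomials of the second kind (U₀(x)=1, U₁(x)=x, U_{s+1}(x)=xU_s(x)-U_{s-1}(x)). Then the sequence (U_s'(N)/U_s(N) − s/√(N²−4))_{s∈ℕ} is bounded; in particular U_s'(N)/U_s(N) → ∞ as s → ∞. -/
open Polynomial

/-- Chebyshev polynomials of the second kind in the normalization
`U₀ = 1`, `U₁(x) = x`, `U_{s+1}(x) = x U_s(x) - U_{s-1}(x)`. -/
noncomputable def chebU : ℕ → Polynomial ℝ
  | 0 => 1
  | 1 => Polynomial.X
  | (s + 2) => Polynomial.X * chebU (s + 1) - chebU s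

lemma chebU_deriv (s : ℕ) :
    derivative (chebU (s + 2)) =
      chebU (s + 1) + X * derivative (chebU (s + 1)) - derivative (chebU s) := by
  show derivative (X * chebU (s + 1) - chebU s) = _
  simp [derivative_mul]

/-- Closed formula for `U_s(q + p)` when `p q = 1`. -/
lemma chebU_eval_closed (q p : ℝ) (hpq : p * q = 1) :
    ∀ s : ℕ, (chebU s).eval (q + p) * (q - p) = q ^ (s + 1) - p ^ (s + 1) := by
  have key : ∀ s : ℕ,
      (chebU s).eval (q + p) * (q - p) = q ^ (s + 1) - p ^ (s + 1) ∧
      (chebU (s + 1)).eval (q + p) * (q - p) = q ^ (s + 2) - p ^ (s + 2) := by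
    intro s
    induction s with
    | zero => constructor <;> simp [chebU] <;> ring
    | succ n ih =>
      obtain ⟨ih0, ih1⟩ := ih
      refine ⟨ih1, ?_⟩
      have : (chebU (n + 2)).eval (q + p) =
          (q + p) * (chebU (n + 1)).eval (q + p) - (chebU n).eval (q + p) := by
        show (X * chebU (n + 1) - chebU n).eval (q + p) = _
        simp
      rw [this]
      linear_combination (q + p) * ih1 - ih0 + (q ^ (n + 1) - p ^ (n + 1)) * hpq
  exact fun s => (key s).1

set_option maxHeartbeats 1000000 in
/-- Closed formula for `U_s'(q + p)` when `p q = 1`. -/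
lemma chebU_deriv_eval_closed (q p : ℝ) (hpq : p * q = 1) :
    ∀ s : ℕ, (derivative (chebU s)).eval (q + p) * (q - p) ^ 3 =
      ((s : ℝ) + 1) * (q ^ (s + 1) + p ^ (s + 1)) * (q - p)
        - (q + p) * (q ^ (s + 1) - p ^ (s + 1)) := by
  have key : ∀ s : ℕ,
      ((derivative (chebU s)).eval (q + p) * (q - p) ^ 3 =
        ((s : ℝ) + 1) * (q ^ (s + 1) + p ^ (s + 1)) * (q - p)
          - (q + p) * (q ^ (s + 1) - p ^ (s + 1))) ∧
      ((derivative (chebU (s + 1))).eval (q + p) * (q - p) ^ 3 =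
        ((s : ℝ) + 2) * (q ^ (s + 2) + p ^ (s + 2)) * (q - p)
          - (q + p) * (q ^ (s + 2) - p ^ (s + 2))) := by
    intro s
    induction s with
    | zero =>
      constructor
      · show (derivative (1 : Polynomial ℝ)).eval (q + p) * (q - p) ^ 3 = _
        simp
      · show (derivative (X : Polynomial ℝ)).eval (q + p) * (q - p) ^ 3 = _
        simp only [derivative_X, eval_one, one_mul]
        ring
    | succ n ih =>
      obtain ⟨ih0, ih1⟩ := ih
      constructor
      · push_cast
        push_cast at ih1
        convert ih1 using 2 <;> ring
      · have hA1 := chebU_eval_closed q p hpq (n + 1)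
        rw [chebU_deriv n]
        simp only [eval_sub, eval_add, eval_mul, eval_X]
        push_cast
        push_cast at ih0 ih1
        linear_combination (q - p) ^ 2 * hA1 + (q + p) * ih1 - ih0 +
          (((n : ℝ) + 1) * (q ^ (n + 1) + p ^ (n + 1)) * (q - p) +
            (q + p) * (p ^ (n + 1) - q ^ (n + 1))) * hpq
  exact fun s => (key s).1

set_option maxHeartbeats 1000000 in
/-- For an integer `N > 2`, the sequence `U_s'(N)/U_s(N) − s/√(N²−4)` is bounded; in
particular `U_s'(N)/U_s(N) → ∞` as `s → ∞`. -/
theorem stmt13 (N : ℕ) (hN : 2 < N) :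
    (∃ M : ℝ, ∀ s : ℕ,
      |(Polynomial.derivative (chebU s)).eval (N : ℝ) / (chebU s).eval (N : ℝ) -
        (s : ℝ) / Real.sqrt ((N : ℝ) ^ 2 - 4)| ≤ M) ∧
    Filter.Tendsto
      (fun s : ℕ =>
        (Polynomial.derivative (chebU s)).eval (N : ℝ) / (chebU s).eval (N : ℝ))
      Filter.atTop Filter.atTop := by
  have hN2 : (2 : ℝ) < (N : ℝ) := by exact_mod_cast hN
  have hpos : (0 : ℝ) < (N : ℝ) ^ 2 - 4 := by nlinarith
  set r : ℝ := Real.sqrt ((N : ℝ) ^ 2 - 4) with hr_def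
  have hr2 : r ^ 2 = (N : ℝ) ^ 2 - 4 := Real.sq_sqrt hpos.le
  have hr : 0 < r := Real.sqrt_pos.mpr hpos
  have hrN : r < (N : ℝ) := by nlinarith
  set q : ℝ := ((N : ℝ) + r) / 2 with hq_def
  set p : ℝ := ((N : ℝ) - r) / 2 with hp_def
  have hpq : p * q = 1 := by
    simp only [hq_def, hp_def]; nlinarith
  have hsum : q + p = (N : ℝ) := by simp only [hq_def, hp_def]; ring
  have hd : q - p = r := by simp only [hq_def, hp_def]; ring
  have hp0 : 0 < p := by simp only [hp_def]; linarith
  have hq1 : 1 < q := by nlinarith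
  have hp1 : p < 1 := by nlinarith
  have hq0 : 0 < q := by linarith
  clear hq_def hp_def
  clear_value q p
  have hA : ∀ s : ℕ, (chebU s).eval (N : ℝ) * r = q ^ (s + 1) - p ^ (s + 1) := by
    intro s; rw [← hsum, ← hd]; exact chebU_eval_closed q p hpq s
  have hB : ∀ s : ℕ, (derivative (chebU s)).eval (N : ℝ) * r ^ 3 =
      ((s : ℝ) + 1) * (q ^ (s + 1) + p ^ (s + 1)) * r
        - (N : ℝ) * (q ^ (s + 1) - p ^ (s + 1)) := by
    intro s; rw [← hsum, ← hd]; exact chebU_deriv_eval_closed q p hpq s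
  have hApos : ∀ s : ℕ, 0 < q ^ (s + 1) - p ^ (s + 1) := by
    intro s
    have : p ^ (s + 1) < q ^ (s + 1) :=
      pow_lt_pow_left₀ (by linarith) hp0.le (Nat.succ_ne_zero s)
    linarith
  have hEpos : ∀ s : ℕ, 0 < (chebU s).eval (N : ℝ) := by
    intro s
    have := hA s
    have h := hApos s
    nlinarith
  have hratio : ∀ s : ℕ,
      (derivative (chebU s)).eval (N : ℝ) / (chebU s).eval (N : ℝ) - (s : ℝ) / r =
      (((s : ℝ) + 1) * (q ^ (s + 1) + p ^ (s + 1)) / (q ^ (s + 1) - p ^ (s + 1))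
        - (s : ℝ)) / r - (N : ℝ) / r ^ 2 := by
    intro s
    have hAs := hA s
    have hBs := hB s
    have hAp := hApos s
    have hE := hEpos s
    have hE' : (chebU s).eval (N : ℝ) = (q ^ (s + 1) - p ^ (s + 1)) / r := by
      rw [eq_div_iff hr.ne']; exact hAs
    have hD' : (derivative (chebU s)).eval (N : ℝ) =
        (((s : ℝ) + 1) * (q ^ (s + 1) + p ^ (s + 1)) * r
          - (N : ℝ) * (q ^ (s + 1) - p ^ (s + 1))) / r ^ 3 := by
      rw [eq_div_iff (by positivity)]; exact hBs
    rw [hE', hD']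
    field_simp
    ring
  set K : ℝ := 1 + 2 / r + 2 / (q ^ 2 - 1) with hK_def
  have hq2 : 0 < q ^ 2 - 1 := by nlinarith
  have hbr : ∀ s : ℕ,
      1 ≤ ((s : ℝ) + 1) * (q ^ (s + 1) + p ^ (s + 1)) / (q ^ (s + 1) - p ^ (s + 1))
        - (s : ℝ) ∧
      ((s : ℝ) + 1) * (q ^ (s + 1) + p ^ (s + 1)) / (q ^ (s + 1) - p ^ (s + 1))
        - (s : ℝ) ≤ K := by
    intro s
    have hAp := hApos s
    have hps : 0 < p ^ (s + 1) := pow_pos hp0 _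
    have hqs : 1 < q ^ (s + 1) := one_lt_pow₀ hq1 (Nat.succ_ne_zero s)
    have hsn : (0 : ℝ) ≤ (s : ℝ) := Nat.cast_nonneg s
    constructor
    · rw [le_sub_iff_add_le, le_div_iff₀ hAp]
      nlinarith [mul_nonneg hsn hps.le]
    · have hsplit : ((s : ℝ) + 1) * (q ^ (s + 1) + p ^ (s + 1)) /
            (q ^ (s + 1) - p ^ (s + 1)) - (s : ℝ) =
          (q ^ (s + 1) + p ^ (s + 1)) / (q ^ (s + 1) - p ^ (s + 1)) +
          2 * (s : ℝ) * p ^ (s + 1) / (q ^ (s + 1) - p ^ (s + 1)) := by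
        field_simp
        ring
      rw [hsplit, hK_def]
      have hle1 : (q ^ (s + 1) + p ^ (s + 1)) / (q ^ (s + 1) - p ^ (s + 1))
          ≤ 1 + 2 / r := by
        rw [div_le_iff₀ hAp]
        have h1 : q ≤ q ^ (s + 1) := le_self_pow₀ hq1.le (Nat.succ_ne_zero s)
        have h2 : p ^ (s + 1) ≤ p := pow_le_of_le_one hp0.le hp1.le (Nat.succ_ne_zero s)
        have hrA : r ≤ q ^ (s + 1) - p ^ (s + 1) := by rw [← hd]; linarith
        have h2r : 2 ≤ 2 / r * (q ^ (s + 1) - p ^ (s + 1)) := by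
          rw [div_mul_eq_mul_div, le_div_iff₀ hr]
          linarith
        have hps1 : p ^ (s + 1) ≤ 1 := pow_le_one₀ hp0.le hp1.le
        nlinarith [h2r, hps1, h1, h2]
      have hle2 : 2 * (s : ℝ) * p ^ (s + 1) / (q ^ (s + 1) - p ^ (s + 1))
          ≤ 2 / (q ^ 2 - 1) := by
        have hpq2 : p * q ^ 2 = q := by linear_combination q * hpq
        have hkey : q ^ (s + 1) - p ^ (s + 1) =
            p ^ (s + 1) * ((q ^ 2) ^ (s + 1) - 1) := by
          have h1 : p ^ (s + 1) * (q ^ 2) ^ (s + 1) = q ^ (s + 1) := by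
            rw [← mul_pow, hpq2]
          nlinarith [h1]
        have hbern : 1 + ((s : ℝ) + 1) * (q ^ 2 - 1) ≤ (q ^ 2) ^ (s + 1) := by
          have h := one_add_mul_le_pow (a := q ^ 2 - 1) (by nlinarith) (s + 1)
          rw [show (1 : ℝ) + (q ^ 2 - 1) = q ^ 2 by ring] at h
          calc 1 + ((s : ℝ) + 1) * (q ^ 2 - 1)
              = 1 + (↑(s + 1) : ℝ) * (q ^ 2 - 1) := by push_cast; ring
            _ ≤ (q ^ 2) ^ (s + 1) := h
        rw [div_le_div_iff₀ hAp hq2, hkey]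
        have hs1 : (s : ℝ) * (q ^ 2 - 1) ≤ (q ^ 2) ^ (s + 1) - 1 := by nlinarith
        nlinarith [mul_le_mul_of_nonneg_left hs1 hps.le]
      linarith
  have hKpos : 0 < K := by
    rw [hK_def]
    have h1 := div_pos (by norm_num : (0:ℝ) < 2) hr
    have h2 := div_pos (by norm_num : (0:ℝ) < 2) hq2
    linarith
  set M : ℝ := K / r + (N : ℝ) / r ^ 2 with hM_def
  have hbound : ∀ s : ℕ,
      |(derivative (chebU s)).eval (N : ℝ) / (chebU s).eval (N : ℝ) -
        (s : ℝ) / r| ≤ M := by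
    intro s
    rw [hratio s, abs_le]
    obtain ⟨hb1, hb2⟩ := hbr s
    have hNr2 : 0 < (N : ℝ) / r ^ 2 := by positivity
    have h1r : (0:ℝ) < 1 / r := by positivity
    have hup : (((s : ℝ) + 1) * (q ^ (s + 1) + p ^ (s + 1)) /
          (q ^ (s + 1) - p ^ (s + 1)) - (s : ℝ)) / r ≤ K / r := by gcongr
    have hlo : 1 / r ≤ (((s : ℝ) + 1) * (q ^ (s + 1) + p ^ (s + 1)) /
          (q ^ (s + 1) - p ^ (s + 1)) - (s : ℝ)) / r := by gcongr
    have hKr : 0 < K / r := by positivity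
    rw [hM_def]
    constructor <;> linarith
  refine ⟨⟨M, hbound⟩, ?_⟩
  apply Filter.tendsto_atTop_mono (f := fun s : ℕ => (s : ℝ) / r - M)
  · intro s
    have h := abs_le.mp (hbound s)
    linarith [h.1]
  · apply Filter.tendsto_atTop_add_const_right
    exact Filter.Tendsto.atTop_div_const hr tendsto_natCast_atTop_atTop
end
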